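/- Let A ∈ ℝ_max^{n×n} be irreducible with eigenvalue λ, and assume A^{⊗(k+σ)} = (σλ) ⊗ A^{⊗k} for all k ≥ k⋆. Then for any initial condition x(0) ∈ ℝ^n, the cycletime limit lim_{k→∞} x_i(k)/k exists and equals λ for every coordinate i. -/

import Mathlib

/-!
Finiteness of a max-plus eigenvector `v` propagates along arcs, since `A j i + v i ≤ λ + v j`;
by irreducibility every node is reached from one where `v` is finite, so `v` is finite.
Then `A^{⊗k} ⊗ v = kλ + v`, and since max-plus maps are nonexpansive for the sup norm,
`x(k)` stays within `‖x(0) - v‖` of `kλ + v`; dividing by `k` gives the limit `λ`.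
-/

open Finset

/-- Max-plus matrix product over ℝ_max = ℝ ∪ {-∞} (`WithBot ℝ`). -/
def mpMul {n : ℕ} (A B : Matrix (Fin n) (Fin n) (WithBot ℝ)) :
    Matrix (Fin n) (Fin n) (WithBot ℝ) :=
  fun i j => univ.sup fun k => A i k + B k j

/-- Max-plus matrix powers, with `A^{⊗0} = E`. -/
def mpPow {n : ℕ} (A : Matrix (Fin n) (Fin n) (WithBot ℝ)) : ℕ → Matrix (Fin n) (Fin n) (WithBot ℝ)
  | 0 => fun i j => if i = j then 0 else ⊥
  | k + 1 => mpMul A (mpPow A k)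

/-- Max-plus matrix–vector product. -/
def mpMulVec {n : ℕ} (A : Matrix (Fin n) (Fin n) (WithBot ℝ)) (v : Fin n → WithBot ℝ) :
    Fin n → WithBot ℝ :=
  fun i => univ.sup fun k => A i k + v k

/-- Max-plus eigenvector. -/
def IsMpEigenvector {n : ℕ} (A : Matrix (Fin n) (Fin n) (WithBot ℝ))
    (l : WithBot ℝ) (v : Fin n → WithBot ℝ) : Prop :=
  (∃ i, v i ≠ ⊥) ∧ mpMulVec A v = fun i => l + v i

/-- Max-plus eigenvalue. -/
def IsMpEigenvalue {n : ℕ} (A : Matrix (Fin n) (Fin n) (WithBot ℝ)) (l : WithBot ℝ) : Prop :=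
  ∃ v, IsMpEigenvector A l v

/-- A matrix is irreducible if its digraph (arc j → i whenever `A i j ≠ -∞`)
is strongly connected. -/
def MpIrreducible {n : ℕ} (A : Matrix (Fin n) (Fin n) (WithBot ℝ)) : Prop :=
  ∀ i j : Fin n, Relation.ReflTransGen (fun a b => A b a ≠ ⊥) i j

open Filter Topology

theorem WithBot.add_finset_sup {ι α : Type*} [LinearOrder α] [Add α] [AddLeftMono α]
    (s : Finset ι) (c : WithBot α) (f : ι → WithBot α) :
    c + s.sup f = s.sup fun k => c + f k :=
  Finset.apply_sup_eq_sup_comp_of_linearOrder (c + ·) (fun _ _ h => add_le_add_right h c)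
    (WithBot.add_bot c)

theorem WithBot.finset_sup_add {ι α : Type*} [LinearOrder α] [AddCommSemigroup α]
    [AddLeftMono α] (s : Finset ι) (f : ι → WithBot α) (c : WithBot α) :
    s.sup f + c = s.sup fun k => f k + c := by
  simp only [add_comm _ c, WithBot.add_finset_sup]

section MaxPlus

variable {n : ℕ}

theorem mpMulVec_mpMul (A B : Matrix (Fin n) (Fin n) (WithBot ℝ)) (x : Fin n → WithBot ℝ) :
    mpMulVec (mpMul A B) x = mpMulVec A (mpMulVec B x) := by
  funext i
  simp only [mpMulVec, mpMul, WithBot.finset_sup_add, WithBot.add_finset_sup, add_assoc]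
  exact Finset.sup_comm _ _ _

theorem mpMulVec_mpPow_zero (A : Matrix (Fin n) (Fin n) (WithBot ℝ)) (x : Fin n → WithBot ℝ) :
    mpMulVec (mpPow A 0) x = x := by
  funext i
  rw [mpMulVec]
  refine le_antisymm (Finset.sup_le fun k _ => ?_) ?_
  · by_cases h : i = k
    · subst h; simp [mpPow]
    · simp [mpPow, h]
  · simpa [mpPow] using Finset.le_sup (f := fun k => mpPow A 0 i k + x k) (Finset.mem_univ i)

theorem mpMulVec_mono (M : Matrix (Fin n) (Fin n) (WithBot ℝ)) : Monotone (mpMulVec M) :=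
  fun _ _ h _ => Finset.sup_mono_fun fun k _ => add_le_add_right (h k) _

theorem mpMulVec_const_add (M : Matrix (Fin n) (Fin n) (WithBot ℝ)) (c : WithBot ℝ)
    (x : Fin n → WithBot ℝ) : mpMulVec M (fun j => c + x j) = fun i => c + mpMulVec M x i := by
  funext i
  simp only [mpMulVec, WithBot.add_finset_sup, add_left_comm c]

theorem mpMulVec_le_const_add (M : Matrix (Fin n) (Fin n) (WithBot ℝ))
    {x y : Fin n → WithBot ℝ} {c : WithBot ℝ} (h : ∀ j, x j ≤ c + y j) (i : Fin n) :
    mpMulVec M x i ≤ c + mpMulVec M y i :=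
  (mpMulVec_mono M h i).trans_eq (congrFun (mpMulVec_const_add M c y) i)

theorem abs_unbotD_mpMulVec_sub_le (M : Matrix (Fin n) (Fin n) (WithBot ℝ))
    (x y : Fin n → ℝ) {i : Fin n} {z : ℝ} (hy : mpMulVec M (fun j => (y j : WithBot ℝ)) i = z) :
    |(mpMulVec M (fun j => (x j : WithBot ℝ)) i).unbotD 0 - z| ≤ ‖x - y‖ := by
  have hdist j : |x j - y j| ≤ ‖x - y‖ := norm_le_pi_norm (x - y) j
  have hle : mpMulVec M (fun j => (x j : WithBot ℝ)) i ≤ ↑‖x - y‖ + z := by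
    refine hy ▸ mpMulVec_le_const_add M (fun j => ?_) i
    exact WithBot.coe_le_coe.mpr (by linarith [(abs_sub_le_iff.mp (hdist j)).1])
  have hge : (z : WithBot ℝ) ≤ ↑‖x - y‖ + mpMulVec M (fun j => (x j : WithBot ℝ)) i := by
    refine hy ▸ mpMulVec_le_const_add M (fun j => ?_) i
    exact WithBot.coe_le_coe.mpr (by linarith [(abs_sub_le_iff.mp (hdist j)).2])
  obtain ⟨r, hr⟩ := WithBot.ne_bot_iff_exists.mp fun hbot : mpMulVec M _ i = ⊥ => by
    rw [hbot, WithBot.add_bot] at hge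
    exact WithBot.coe_ne_bot (le_bot_iff.mp hge)
  rw [← hr] at hle hge ⊢
  norm_cast at hle hge
  rw [WithBot.unbotD_coe, abs_sub_le_iff]
  constructor <;> linarith

theorem mpMulVec_mpPow_of_eigenvector {A : Matrix (Fin n) (Fin n) (WithBot ℝ)} {l : ℝ}
    {v : Fin n → WithBot ℝ} (hv : mpMulVec A v = fun i => (l : WithBot ℝ) + v i) (k : ℕ) :
    mpMulVec (mpPow A k) v = fun i => ↑(k * l) + v i := by
  induction k with
  | zero => simp [mpMulVec_mpPow_zero]
  | succ k ih =>
    rw [mpPow, mpMulVec_mpMul, ih, mpMulVec_const_add, hv]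
    funext i
    rw [← add_assoc, ← WithBot.coe_add]
    congr 2
    push_cast
    ring

theorem IsMpEigenvector.ne_bot_of_irreducible {A : Matrix (Fin n) (Fin n) (WithBot ℝ)}
    {l : WithBot ℝ} {v : Fin n → WithBot ℝ} (hv : IsMpEigenvector A l v) (hA : MpIrreducible A)
    (i : Fin n) : v i ≠ ⊥ := by
  obtain ⟨⟨i₀, hi₀⟩, heq⟩ := hv
  induction hA i₀ i with
  | refl => exact hi₀
  | @tail b c _ hcb hb =>
    intro hc
    have : A c b + v b ≤ l + v c :=
      congrFun heq c ▸ Finset.le_sup (f := fun k => A c k + v k) (Finset.mem_univ b)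
    rw [hc, WithBot.add_bot, le_bot_iff, WithBot.add_eq_bot] at this
    exact this.elim hcb hb

end MaxPlus

theorem tendsto_div_of_abs_sub_le {f : ℕ → ℝ} {l b C : ℝ} (h : ∀ k : ℕ, |f k - (k * l + b)| ≤ C) :
    Tendsto (fun k : ℕ => f k / k) atTop (𝓝 l) := by
  have hlin : ∀ b' : ℝ, Tendsto (fun k : ℕ => (k * l + b') / k) atTop (𝓝 l) := fun b' => by
    have := (tendsto_const_div_atTop_nhds_zero_nat b').const_add l
    rw [add_zero] at this
    refine this.congr' ((eventually_ne_atTop 0).mono fun k hk => ?_)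
    field_simp
  refine tendsto_of_tendsto_of_tendsto_of_le_of_le' (hlin (b - C)) (hlin (b + C)) ?_ ?_ <;>
  · filter_upwards [eventually_gt_atTop 0] with k hk
    gcongr
    linarith [(abs_sub_le_iff.mp (h k)).1, (abs_sub_le_iff.mp (h k)).2]

theorem mp_cycletime_eq_eigenvalue_general {n : ℕ}
    (A : Matrix (Fin n) (Fin n) (WithBot ℝ)) (l : ℝ)
    (hirr : MpIrreducible A) (heig : IsMpEigenvalue A (l : WithBot ℝ)) :
    ∀ x0 : Fin n → ℝ, ∀ i : Fin n,
      Filter.Tendsto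
        (fun k : ℕ => WithBot.unbotD 0 (mpMulVec (mpPow A k) (fun j => (x0 j : WithBot ℝ)) i) / k)
        Filter.atTop (nhds l) := by
  obtain ⟨v, hv⟩ := heig
  have hfin := hv.ne_bot_of_irreducible hirr
  set w : Fin n → ℝ := fun j => (v j).unbot (hfin j)
  have hvw : v = fun j => (w j : WithBot ℝ) := funext fun j => (WithBot.coe_unbot _ _).symm
  intro x0 i
  refine tendsto_div_of_abs_sub_le (b := w i) (C := ‖x0 - w‖) fun k => ?_
  refine abs_unbotD_mpMulVec_sub_le _ x0 w ?_
  rw [← hvw, mpMulVec_mpPow_of_eigenvector hv.2 k, hvw]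
  push_cast
  rfl

/-- For an irreducible matrix `A` with (finite) eigenvalue λ satisfying the
asymptotic power identity, the cycletime limit `lim_{k→∞} x_i(k)/k` exists and
equals λ for every coordinate i and every finite initial condition. -/
theorem mp_cycletime_eq_eigenvalue {n : ℕ}
    (A : Matrix (Fin n) (Fin n) (WithBot ℝ)) (l : ℝ) (σ kstar : ℕ)
    (hirr : MpIrreducible A) (heig : IsMpEigenvalue A (l : WithBot ℝ))
    (hpow : ∀ k, kstar ≤ k →
      mpPow A (k + σ) = fun i j => σ • (l : WithBot ℝ) + mpPow A k i j) :
    ∀ x0 : Fin n → ℝ, ∀ i : Fin n,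
      Filter.Tendsto
        (fun k : ℕ => WithBot.unbotD 0 (mpMulVec (mpPow A k) (fun j => (x0 j : WithBot ℝ)) i) / k)
        Filter.atTop (nhds l) :=
  mp_cycletime_eq_eigenvalue_general A l hirr heig
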